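/- Let Γ be a pre-automatic structure over a finite alphabet A that is an automatic cross-section, with interpretation σ : A⁺ → S consistent with an assignment of generators ι : A → L. Then for e ∈ L, the element σ(e) is a two-sided identity of S if and only if (e, ι(a)) ∈ Lₐ for every a ∈ A and L_e = L₌. -/

import Mathlib

/-!
Condition (iii) applied to `ι` turns `(e, ι(a)) ∈ Lₐ` into `σ(e) σ(a) = σ(a)`, so `σ(e)` is a left
identity on the generators and hence on `S`. Chaining (iii) along a word shows
`(u, v) ∈ L_w ↔ σ(u w) = σ(v)`, so by (ii) `L_e = L₌` says `σ(u) σ(e) = σ(u)` for all `u ∈ L`; as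
`σ(L) = S`, this means that `σ(e)` is a right identity.
-/

universe u v

/-- A pre-automatic structure over an alphabet `A`: a language `L` of nonempty words
(elements of the free semigroup `A⁺`), a relation `L₌ ⊆ L × L`, and for each letter
`a ∈ A` a relation `Lₐ ⊆ L × L`. -/
structure PreAutomaticStructure (A : Type u) where
  L : Set (FreeSemigroup A)
  Leq : Set (FreeSemigroup A × FreeSemigroup A)
  Lletter : A → Set (FreeSemigroup A × FreeSemigroup A)
  Leq_sub : Leq ⊆ L ×ˢ L
  Lletter_sub : ∀ a, Lletter a ⊆ L ×ˢ L

/-- An interpretation of a pre-automatic structure with respect to a semigroup `S`: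
a semigroup homomorphism `σ : A⁺ → S` such that (i) `σ(L) = S`, (ii) `L₌` captures
equality of representatives, (iii) `Lₐ` captures right multiplication by `a`. -/
structure IsInterpretation {A : Type u} {S : Type v} [Semigroup S]
    (Γ : PreAutomaticStructure A) (σ : FreeSemigroup A →ₙ* S) : Prop where
  surj : ⇑σ '' Γ.L = Set.univ
  eq_iff : ∀ u ∈ Γ.L, ∀ v ∈ Γ.L, ((u, v) ∈ Γ.Leq ↔ σ u = σ v)
  step_iff : ∀ (a : A), ∀ u ∈ Γ.L, ∀ v ∈ Γ.L,
    ((u, v) ∈ Γ.Lletter a ↔ σ (u * FreeSemigroup.of a) = σ v)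

/-- `σ` is consistent with the assignment of generators `ι : A → L`. -/
def ConsistentWith {A : Type u} {S : Type v} [Semigroup S] (Γ : PreAutomaticStructure A)
    (σ : FreeSemigroup A →ₙ* S) (ι : A → FreeSemigroup A) : Prop :=
  (∀ a, ι a ∈ Γ.L) ∧ ∀ a, σ (ι a) = σ (FreeSemigroup.of a)

/-- `ι : A → L` is an assignment of generators: some interpretation is consistent with it. -/
def IsAssignment {A : Type u} (Γ : PreAutomaticStructure A)
    (ι : A → FreeSemigroup A) : Prop :=
  ∃ (T : Type v) (inst : Semigroup T)
    (τ : @MulHom (FreeSemigroup A) T _ inst.toMul),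
    @IsInterpretation A T inst Γ τ ∧ @ConsistentWith A T inst Γ τ ι

/-- Composition of relations: `(u, v) ∈ R ∘ R'` iff `∃ x, (u, x) ∈ R ∧ (x, v) ∈ R'`. -/
def relComp {W : Type*} (R R' : Set (W × W)) : Set (W × W) :=
  {p | ∃ x, (p.1, x) ∈ R ∧ (x, p.2) ∈ R'}

/-- The inverse of a relation. -/
def relInv {W : Type*} (R : Set (W × W)) : Set (W × W) := {p | (p.2, p.1) ∈ R}

/-- `L_w` for a word `w` given as a list of letters: `L_ε = L₌` and
`L_{a₁⋯aₙ} = L_{a₁} ∘ ⋯ ∘ L_{aₙ}`. -/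
def PreAutomaticStructure.LwordList {A : Type u} (Γ : PreAutomaticStructure A) :
    List A → Set (FreeSemigroup A × FreeSemigroup A)
  | [] => Γ.Leq
  | [a] => Γ.Lletter a
  | a :: b :: rest => relComp (Γ.Lletter a) (Γ.LwordList (b :: rest))

/-- `L_w` for a nonempty word `w ∈ A⁺`. -/
def PreAutomaticStructure.Lword {A : Type u} (Γ : PreAutomaticStructure A)
    (w : FreeSemigroup A) : Set (FreeSemigroup A × FreeSemigroup A) :=
  Γ.LwordList (w.head :: w.tail)

theorem PreAutomaticStructure.LwordList_cons_subset {A : Type u} (Γ : PreAutomaticStructure A) :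
    ∀ (l : List A) (a : A), Γ.LwordList (a :: l) ⊆ Γ.L ×ˢ Γ.L
  | [], a => Γ.Lletter_sub a
  | b :: l, a => by
    rintro ⟨u, v⟩ ⟨x, hux, hxv⟩
    exact ⟨(Γ.Lletter_sub a hux).1, (Γ.LwordList_cons_subset l b hxv).2⟩

theorem PreAutomaticStructure.Lword_subset {A : Type u} (Γ : PreAutomaticStructure A)
    (w : FreeSemigroup A) : Γ.Lword w ⊆ Γ.L ×ˢ Γ.L :=
  Γ.LwordList_cons_subset w.tail w.head

theorem FreeSemigroup.mul_map_eq_of_forall_of {A : Type u} {M : Type v} [Semigroup M]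
    (f : FreeSemigroup A →ₙ* M) {x : M} (h : ∀ a, x * f (of a) = f (of a))
    (w : FreeSemigroup A) : x * f w = f w := by
  induction w using FreeSemigroup.recOnMul with
  | ih1 a => exact h a
  | ih2 a w _ hw => rw [map_mul, ← mul_assoc, h, ← map_mul]

namespace IsInterpretation

variable {A : Type u} {S : Type v} [Semigroup S] {Γ : PreAutomaticStructure A}
  {σ : FreeSemigroup A →ₙ* S}

theorem exists_mem_L_map_eq (hσ : IsInterpretation Γ σ) (s : S) : ∃ u ∈ Γ.L, σ u = s :=
  (Set.mem_image _ _ _).1 (hσ.surj ▸ Set.mem_univ s)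

theorem mem_LwordList_cons_iff (hσ : IsInterpretation Γ σ) :
    ∀ (l : List A) (a : A) {u v : FreeSemigroup A}, u ∈ Γ.L → v ∈ Γ.L →
      ((u, v) ∈ Γ.LwordList (a :: l) ↔ σ (u * ⟨a, l⟩) = σ v)
  | [], a, u, v, hu, hv => hσ.step_iff a u hu v hv
  | b :: l, a, u, v, hu, hv => by
    have hsplit : (⟨a, b :: l⟩ : FreeSemigroup A) = FreeSemigroup.of a * ⟨b, l⟩ := rfl
    rw [hsplit, ← mul_assoc, map_mul σ (u * _)]
    constructor
    · rintro ⟨x, hux, hxv⟩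
      have hx := (Γ.Lletter_sub a hux).2
      rw [(hσ.step_iff a u hu x hx).1 hux, ← map_mul]
      exact (hσ.mem_LwordList_cons_iff l b hx hv).1 hxv
    · intro h
      obtain ⟨x, hx, hxu⟩ := hσ.exists_mem_L_map_eq (σ (u * FreeSemigroup.of a))
      refine ⟨x, (hσ.step_iff a u hu x hx).2 hxu.symm, (hσ.mem_LwordList_cons_iff l b hx hv).2 ?_⟩
      rwa [map_mul, hxu]

theorem mem_Lword_iff (hσ : IsInterpretation Γ σ) (w : FreeSemigroup A) {u v : FreeSemigroup A}
    (hu : u ∈ Γ.L) (hv : v ∈ Γ.L) : (u, v) ∈ Γ.Lword w ↔ σ (u * w) = σ v :=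
  hσ.mem_LwordList_cons_iff w.tail w.head hu hv

theorem Lword_eq_Leq_iff (hσ : IsInterpretation Γ σ) (w : FreeSemigroup A) :
    Γ.Lword w = Γ.Leq ↔ ∀ s : S, s * σ w = s := by
  constructor
  · intro hw s
    obtain ⟨u, hu, rfl⟩ := hσ.exists_mem_L_map_eq s
    obtain ⟨v, hv, hvu⟩ := hσ.exists_mem_L_map_eq (σ (u * w))
    have huv : (u, v) ∈ Γ.Leq := hw ▸ (hσ.mem_Lword_iff w hu hv).2 hvu.symm
    rw [← map_mul, ← hvu, (hσ.eq_iff u hu v hv).1 huv]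
  · intro hright
    ext ⟨u, v⟩
    constructor
    · intro huv
      obtain ⟨hu, hv⟩ := Γ.Lword_subset w huv
      rw [hσ.mem_Lword_iff w hu hv, map_mul, hright] at huv
      exact (hσ.eq_iff u hu v hv).2 huv
    · intro huv
      obtain ⟨hu, hv⟩ := Γ.Leq_sub huv
      rw [hσ.eq_iff u hu v hv] at huv
      rw [hσ.mem_Lword_iff w hu hv, map_mul, hright, huv]

theorem forall_mem_Lletter_iff (hσ : IsInterpretation Γ σ) {ι : A → FreeSemigroup A}
    (hι : ConsistentWith Γ σ ι) {e : FreeSemigroup A} (he : e ∈ Γ.L) :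
    (∀ a, (e, ι a) ∈ Γ.Lletter a) ↔ ∀ s : S, σ e * s = s := by
  simp only [fun a => hσ.step_iff a e he (ι a) (hι.1 a), hι.2, map_mul]
  refine ⟨fun hgen s => ?_, fun hleft a => hleft _⟩
  obtain ⟨u, -, rfl⟩ := hσ.exists_mem_L_map_eq s
  exact FreeSemigroup.mul_map_eq_of_forall_of σ hgen u

end IsInterpretation

theorem stmt_11_general {A : Type*} {S : Type*} [Semigroup S]
    (Γ : PreAutomaticStructure A) (σ : FreeSemigroup A →ₙ* S)
    (hσ : IsInterpretation Γ σ)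
    (ι : A → FreeSemigroup A) (hι : ConsistentWith Γ σ ι)
    (e : FreeSemigroup A) (he : e ∈ Γ.L) :
    (∀ s : S, σ e * s = s ∧ s * σ e = s) ↔
      ((∀ a : A, (e, ι a) ∈ Γ.Lletter a) ∧ Γ.Lword e = Γ.Leq) := by
  rw [forall_and, hσ.forall_mem_Lletter_iff hι he, hσ.Lword_eq_Leq_iff e]

/-- For an automatic cross-section with assignment of generators `ι` and `e ∈ L`:
`σ(e)` is a two-sided identity iff `(e, ι(a)) ∈ Lₐ` for every `a ∈ A` and `L_e = L₌`. -/
theorem stmt_11 {A : Type*} [Finite A] {S : Type*} [Semigroup S]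
    (Γ : PreAutomaticStructure A) (σ : FreeSemigroup A →ₙ* S)
    (hσ : IsInterpretation Γ σ) (hcs : Set.BijOn (⇑σ) Γ.L Set.univ)
    (ι : A → FreeSemigroup A) (hι : ConsistentWith Γ σ ι)
    (e : FreeSemigroup A) (he : e ∈ Γ.L) :
    (∀ s : S, σ e * s = s ∧ s * σ e = s) ↔
      ((∀ a : A, (e, ι a) ∈ Γ.Lletter a) ∧ Γ.Lword e = Γ.Leq) :=
  stmt_11_general Γ σ hσ ι hι e he
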